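/- arXiv:2012.00681 — 2 statements merged into one kernel-verified Lean document; each statement's English description precedes it below -/
import Mathlib

section
/- Length contraction (general form): let p, q be timelike vectors and let w ∈ p^⊥ be a nonzero spacelike vector with ⟨p,q⟩ ≠ 0. Define w' := w - (⟨w,q⟩/⟨p,q⟩)p. Then w' ∈ q^⊥ and ⟨w',w'⟩ = ⟨w,w⟩·(1 + ta(q,w)/ta(p,q)). -/
/-!
Expanding gives `⟨w', w'⟩ = ⟨w, w⟩ + c² ⟨p, p⟩` with `c = ⟨w, q⟩ / ⟨p, q⟩`, and the quotient of tances is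
`c² ⟨p, p⟩ / ⟨w, w⟩`; dividing by `⟨w, w⟩` is legitimate because `w`, being orthogonal to the
timelike `p`, is spacelike. That last fact is Cauchy–Schwarz on the spatial parts: with
`⟨w, p⟩ = 0` one gets `(w₀ p₀)² = (w⃗ ⬝ p⃗)² ≤ |w⃗|² |p⃗|² < |w⃗|² p₀²`.
-/

noncomputable def mdot {n : ℕ} (p q : Fin (n + 1) → ℝ) : ℝ :=
  (∑ i, p i * q i) - 2 * (p 0 * q 0)

noncomputable def tance {n : ℕ} (p q : Fin (n + 1) → ℝ) : ℝ :=
  (mdot p q) ^ 2 / (mdot p p * mdot q q)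

open Matrix

lemma dotProduct_sq_le_dotProduct_self_mul {ι : Type*} [Fintype ι] (u v : ι → ℝ) :
    (u ⬝ᵥ v) ^ 2 ≤ (u ⬝ᵥ u) * (v ⬝ᵥ v) := by
  simpa only [dotProduct, sq] using Finset.sum_mul_sq_le_sq_mul_sq Finset.univ u v

lemma dotProduct_self_nonneg {ι : Type*} [Fintype ι] (u : ι → ℝ) : 0 ≤ u ⬝ᵥ u :=
  Fintype.sum_nonneg fun _ => mul_self_nonneg _

namespace mdot

variable {n : ℕ}

lemma eq_tail_dotProduct_sub (p q : Fin (n + 1) → ℝ) :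
    mdot p q = Fin.tail p ⬝ᵥ Fin.tail q - p 0 * q 0 := by
  simp only [mdot, dotProduct, Fin.sum_univ_succ, Fin.tail]
  ring

lemma comm (p q : Fin (n + 1) → ℝ) : mdot p q = mdot q p := by
  simp only [mdot, mul_comm]

lemma sub_smul_left (w p q : Fin (n + 1) → ℝ) (c : ℝ) :
    mdot (w - c • p) q = mdot w q - c * mdot p q := by
  simp only [mdot, Pi.sub_apply, Pi.smul_apply, smul_eq_mul, sub_mul, Finset.sum_sub_distrib,
    mul_assoc, ← Finset.mul_sum]
  ring

lemma sub_smul_self (w p : Fin (n + 1) → ℝ) (c : ℝ) :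
    mdot (w - c • p) (w - c • p) = mdot w w - 2 * c * mdot w p + c ^ 2 * mdot p p := by
  rw [sub_smul_left, comm w, comm p, sub_smul_left, sub_smul_left, comm p w]
  ring

theorem self_pos_of_eq_zero_of_timelike {p w : Fin (n + 1) → ℝ} (hp : mdot p p < 0)
    (hw : w ≠ 0) (hwp : mdot w p = 0) : 0 < mdot w w := by
  rw [eq_tail_dotProduct_sub] at hp hwp ⊢
  set W := Fin.tail w
  set P := Fin.tail p
  have hP : P ⬝ᵥ P < p 0 * p 0 := by linarith
  have hp0 : p 0 ≠ 0 := fun h => by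
    rw [h, mul_zero] at hP
    exact (dotProduct_self_nonneg P).not_gt hP
  have hW : 0 < W ⬝ᵥ W := by
    refine (dotProduct_self_nonneg W).lt_of_ne fun hW0 => hw ?_
    have hW : W = 0 := dotProduct_self_eq_zero.mp hW0.symm
    have hw0 : w 0 = 0 := by
      simpa [hW, hp0] using hwp
    funext i
    exact Fin.cases hw0 (congrFun hW) i
  have hCS : (w 0 * p 0) ^ 2 ≤ (W ⬝ᵥ W) * (P ⬝ᵥ P) := by
    rw [← sub_eq_zero.mp hwp]
    exact dotProduct_sq_le_dotProduct_self_mul W P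
  nlinarith [mul_lt_mul_of_pos_left hP hW, mul_self_pos.mpr hp0]

end mdot

lemma tance_div_tance {n : ℕ} {p q w : Fin (n + 1) → ℝ} (hq : mdot q q ≠ 0) :
    tance q w / tance p q = mdot w q ^ 2 * mdot p p / (mdot w w * mdot p q ^ 2) := by
  rw [tance, tance, mdot.comm q w]
  by_cases hw : mdot w w = 0
  · simp [hw]
  by_cases hp : mdot p p = 0
  · simp [hp]
  by_cases hpq : mdot p q = 0
  · simp [hpq]
  field_simp

/-- length contraction, general form. -/
theorem length_contraction {n : ℕ} (p q w : Fin (n + 1) → ℝ)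
    (hp : mdot p p < 0) (hq : mdot q q < 0)
    (hw : w ≠ 0) (hwp : mdot w p = 0) (hpq : mdot p q ≠ 0) :
    mdot (w - (mdot w q / mdot p q) • p) q = 0 ∧
    mdot (w - (mdot w q / mdot p q) • p) (w - (mdot w q / mdot p q) • p)
      = mdot w w * (1 + tance q w / tance p q) := by
  have hww : 0 < mdot w w := mdot.self_pos_of_eq_zero_of_timelike hp hw hwp
  refine ⟨by rw [mdot.sub_smul_left, div_mul_cancel₀ _ hpq, sub_self], ?_⟩
  rw [mdot.sub_smul_self, hwp, tance_div_tance hq.ne]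
  field_simp
  ring
end

section
/- If p, q are timelike vectors, w ∈ p^⊥ is nonzero with p, q, w linearly dependent (coplanar), and ⟨p,q⟩ ≠ 0, then ta(w,q) + ta(p,q) = 1; equivalently, the determinant of the Gram matrix of (p,q,w) vanishes, and consequently ⟨w',w'⟩ = ⟨w,w⟩/ta(p,q) where w' = w - (⟨w,q⟩/⟨p,q⟩)p. -/
theorem LinearMap.BilinForm.det_gram_eq_zero_of_not_linearIndependent {K M ι : Type*} [Field K]
    [AddCommGroup M] [Module K M] [Fintype ι] [DecidableEq ι] (B : LinearMap.BilinForm K M)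
    {v : ι → M} (hv : ¬ LinearIndependent K v) :
    (Matrix.of fun i j => B (v i) (v j)).det = 0 := by
  obtain ⟨g, hg, i, hgi⟩ := Fintype.not_linearIndependent_iff.mp hv
  refine Matrix.exists_mulVec_eq_zero_iff.mp ⟨g, fun h => hgi (congrFun h i), ?_⟩
  ext k
  simpa [Matrix.mulVec, dotProduct, map_sum, mul_comm] using congrArg (B (v k)) hg

section

variable {n : ℕ}

theorem mdot_comm (p q : Fin (n + 1) → ℝ) : mdot p q = mdot q p := by
  simp only [mdot, mul_comm]

noncomputable def minkowskiForm (n : ℕ) : LinearMap.BilinForm ℝ (Fin (n + 1) → ℝ) :=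
  LinearMap.mk₂ ℝ mdot
    (fun p p' q => by simp only [mdot, Pi.add_apply, add_mul, Finset.sum_add_distrib]; ring)
    (fun c p q => by
      simp only [mdot, Pi.smul_apply, smul_eq_mul, mul_assoc, ← Finset.mul_sum]; ring)
    (fun p q q' => by simp only [mdot, Pi.add_apply, mul_add, Finset.sum_add_distrib]; ring)
    (fun c p q => by
      simp only [mdot, Pi.smul_apply, smul_eq_mul, mul_left_comm _ c, ← Finset.mul_sum]; ring)

@[simp]
theorem minkowskiForm_apply (p q : Fin (n + 1) → ℝ) : minkowskiForm n p q = mdot p q := rfl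

theorem mdot_eq_sum_succ_sub (p q : Fin (n + 1) → ℝ) :
    mdot p q = ∑ i : Fin n, p i.succ * q i.succ - p 0 * q 0 := by
  rw [mdot, Fin.sum_univ_succ]; ring

/-- Cauchy–Schwarz on the spatial parts: if `⟨w,w⟩ ≤ 0` then
`(w₀p₀)² ≤ |w̄|²|p̄|² ≤ w₀²|p̄|² < w₀²p₀²` unless `w₀ = 0`, and then `w̄ = 0` too. -/
theorem mdot_self_pos_of_mdot_eq_zero {p w : Fin (n + 1) → ℝ} (hp : mdot p p < 0)
    (hw : w ≠ 0) (hwp : mdot w p = 0) : 0 < mdot w w := by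
  rw [mdot_eq_sum_succ_sub] at hp hwp ⊢
  by_contra! hww
  have hcs := Finset.sum_mul_sq_le_sq_mul_sq Finset.univ (fun i : Fin n => w i.succ)
    (fun i : Fin n => p i.succ)
  simp only [sq] at hcs
  rw [show ∑ i : Fin n, w i.succ * p i.succ = w 0 * p 0 by linarith] at hcs
  have hpp : 0 ≤ ∑ i : Fin n, p i.succ * p i.succ :=
    Finset.sum_nonneg fun i _ => mul_self_nonneg _
  have htimelike : 0 < p 0 * p 0 - ∑ i : Fin n, p i.succ * p i.succ := by linarith
  have hww' : ∑ i : Fin n, w i.succ * w i.succ ≤ w 0 * w 0 := by linarith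
  have hw0 : w 0 = 0 := by
    have h := mul_le_mul_of_nonneg_right hww' hpp
    have : w 0 * w 0 * (p 0 * p 0 - ∑ i : Fin n, p i.succ * p i.succ) ≤ 0 := by
      linear_combination hcs.trans h
    exact mul_self_eq_zero.mp <|
      (nonpos_of_mul_nonpos_left (by linarith) htimelike).antisymm (mul_self_nonneg _)
  have hx : ∀ i : Fin n, w i.succ = 0 := by
    rw [hw0, mul_zero] at hww'
    have := (Finset.sum_eq_zero_iff_of_nonneg fun i _ => mul_self_nonneg (w (Fin.succ i))).mp
      (hww'.antisymm (Finset.sum_nonneg fun i _ => mul_self_nonneg _))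
    exact fun i => mul_self_eq_zero.mp (this i (Finset.mem_univ i))
  exact hw (funext fun i => Fin.cases hw0 hx i)

theorem mdot_sub_smul_self (w p : Fin (n + 1) → ℝ) (t : ℝ) :
    mdot (w - t • p) (w - t • p) = mdot w w - 2 * t * mdot w p + t ^ 2 * mdot p p := by
  change minkowskiForm n (w - t • p) (w - t • p) = _
  simp only [map_sub, map_smul, LinearMap.sub_apply, LinearMap.smul_apply,
    smul_eq_mul, minkowskiForm_apply]
  rw [mdot_comm p w]
  ring

theorem det_mdot_gram_eq_zero {p q w : Fin (n + 1) → ℝ} (hwp : mdot w p = 0)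
    (hdep : ¬ LinearIndependent ℝ ![p, q, w]) :
    Matrix.det !![mdot p p, mdot p q, 0;
                  mdot q p, mdot q q, mdot q w;
                  0, mdot w q, mdot w w] = 0 := by
  have hG : !![mdot p p, mdot p q, 0; mdot q p, mdot q q, mdot q w; 0, mdot w q, mdot w w] =
      Matrix.of fun i j => minkowskiForm n (![p, q, w] i) (![p, q, w] j) := by
    ext i j
    fin_cases i <;> fin_cases j <;> simp [hwp, mdot_comm p w]
  rw [hG]
  exact (minkowskiForm n).det_gram_eq_zero_of_not_linearIndependent hdep

theorem mdot_self_mul_mdot_self_mul_mdot_self_eq {p q w : Fin (n + 1) → ℝ} (hwp : mdot w p = 0)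
    (hdep : ¬ LinearIndependent ℝ ![p, q, w]) :
    mdot p p * mdot q q * mdot w w = mdot p p * mdot q w ^ 2 + mdot p q ^ 2 * mdot w w := by
  have h := det_mdot_gram_eq_zero hwp hdep
  simp only [Matrix.det_fin_three, Matrix.of_apply, Matrix.cons_val', Matrix.cons_val_zero,
    Matrix.cons_val_fin_one, Matrix.cons_val_one, Matrix.cons_val, mul_zero, add_zero, zero_mul,
    sub_zero] at h
  rw [mdot_comm q p, mdot_comm w q] at h
  linear_combination h

end

/-- in the coplanar case, `ta(w,q) + ta(p,q) = 1`; equivalently the Gram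
determinant of `(p,q,w)` vanishes, and consequently `⟨w',w'⟩ = ⟨w,w⟩/ta(p,q)`. -/
theorem coplanar_tance_identity {n : ℕ} (p q w : Fin (n + 1) → ℝ)
    (hp : mdot p p < 0) (hq : mdot q q < 0)
    (hw : w ≠ 0) (hwp : mdot w p = 0) (hpq : mdot p q ≠ 0)
    (hdep : ¬ LinearIndependent ℝ ![p, q, w]) :
    tance w q + tance p q = 1 ∧
    Matrix.det !![mdot p p, mdot p q, 0;
                  mdot q p, mdot q q, mdot q w;
                  0, mdot w q, mdot w w] = 0 ∧
    mdot (w - (mdot w q / mdot p q) • p) (w - (mdot w q / mdot p q) • p)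
      = mdot w w / tance p q := by
  have hgram := mdot_self_mul_mdot_self_mul_mdot_self_eq hwp hdep
  have hww := (mdot_self_pos_of_mdot_eq_zero hp hw hwp).ne'
  have hpp := hp.ne
  have hqq := hq.ne
  refine ⟨?_, det_mdot_gram_eq_zero hwp hdep, ?_⟩
  · rw [tance, tance, mdot_comm w q]
    field_simp
    linear_combination -hgram
  · rw [mdot_sub_smul_self, hwp, tance, mdot_comm w q]
    field_simp
    linear_combination -hgram
end
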